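/- arXiv:2305.04086 — 4 statements merged into one kernel-verified Lean document; each statement's English description precedes it below -/
import Mathlib

section
/- For y_i > y_j, σ_i, σ_j > 0, the function R(r_i, r_j) = (y_i − y_j)² / (2(σ_i²/r_i + σ_j²/r_j)) on (0,∞)² is jointly concave in (r_i, r_j). -/
/-!
By Cauchy–Schwarz (Sedrakyan's form), `(s/x + t/y)⁻¹ ≤ α²x/s + (1-α)²y/t` for every `α`, with
equality at `α = (s/x)/(s/x + t/y)`. So `(s/x + t/y)⁻¹` is a pointwise minimum of linear functions
of `(x, y)`, hence concave, and the rate is a nonnegative multiple of it.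
-/

open Set

theorem concaveOn_of_le_of_exists_eq {𝕜 E β ι : Type*} [Semiring 𝕜] [PartialOrder 𝕜]
    [AddCommMonoid E] [SMul 𝕜 E] [AddCommMonoid β] [PartialOrder β] [IsOrderedAddMonoid β]
    [Module 𝕜 β] [PosSMulMono 𝕜 β] {s : Set E} {f : E → β} {g : ι → E → β}
    (hs : Convex 𝕜 s) (hg : ∀ i, ConcaveOn 𝕜 s (g i)) (hle : ∀ i, ∀ x ∈ s, f x ≤ g i x)
    (heq : ∀ x ∈ s, ∃ i, g i x = f x) : ConcaveOn 𝕜 s f := by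
  refine ⟨hs, fun x hx y hy a b ha hb hab => ?_⟩
  obtain ⟨i, hi⟩ := heq _ (hs hx hy ha hb hab)
  calc a • f x + b • f y ≤ a • g i x + b • g i y :=
        add_le_add (smul_le_smul_of_nonneg_left (hle i x hx) ha)
          (smul_le_smul_of_nonneg_left (hle i y hy) hb)
    _ ≤ g i (a • x + b • y) := (hg i).2 hx hy ha hb hab
    _ = f (a • x + b • y) := hi

theorem inv_add_le_sq_div_add_sq_div {u v α β : ℝ} (hu : 0 < u) (hv : 0 < v)
    (hαβ : α + β = 1) : (u + v)⁻¹ ≤ α ^ 2 / u + β ^ 2 / v := by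
  have := Finset.sq_sum_div_le_sum_sq_div Finset.univ ![α, β] (g := ![u, v])
    (by simp [Fin.forall_fin_two, hu, hv])
  simpa [Fin.sum_univ_two, hαβ] using this

theorem inv_add_eq_sq_div_add_sq_div {u v : ℝ} (hu : 0 < u) (hv : 0 < v) :
    (u + v)⁻¹ = (u / (u + v)) ^ 2 / u + (1 - u / (u + v)) ^ 2 / v := by
  field_simp
  ring

theorem concaveOn_inv_div_add_div {s t : ℝ} (hs : 0 < s) (ht : 0 < t) :
    ConcaveOn ℝ (Ioi 0 ×ˢ Ioi 0) (fun p : ℝ × ℝ => (s / p.1 + t / p.2)⁻¹) := by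
  let g (α : ℝ) : ℝ × ℝ →ₗ[ℝ] ℝ :=
    (α ^ 2 / s) • LinearMap.fst ℝ ℝ ℝ + ((1 - α) ^ 2 / t) • LinearMap.snd ℝ ℝ ℝ
  have hg (α : ℝ) (p : ℝ × ℝ) : g α p = α ^ 2 / (s / p.1) + (1 - α) ^ 2 / (t / p.2) := by
    simp only [g, LinearMap.add_apply, LinearMap.smul_apply, LinearMap.fst_apply,
      LinearMap.snd_apply, smul_eq_mul, div_div_eq_mul_div]
    ring
  have hquad : Convex ℝ (Ioi (0 : ℝ) ×ˢ Ioi (0 : ℝ)) := (convex_Ioi 0).prod (convex_Ioi 0)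
  refine concaveOn_of_le_of_exists_eq hquad (fun α => (g α).concaveOn hquad) ?_ ?_
  · rintro α p ⟨hp1, hp2⟩
    rw [hg]
    exact inv_add_le_sq_div_add_sq_div (div_pos hs hp1) (div_pos ht hp2) (add_sub_cancel α 1)
  · rintro p ⟨hp1, hp2⟩
    refine ⟨(s / p.1) / (s / p.1 + t / p.2), ?_⟩
    rw [hg]
    exact (inv_add_eq_sq_div_add_sq_div (div_pos hs hp1) (div_pos ht hp2)).symm

theorem pairwise_rate_concave_general
    (yi yj σi σj : ℝ) (hσi : 0 < σi) (hσj : 0 < σj) :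
    ConcaveOn ℝ (Set.Ioi (0 : ℝ) ×ˢ Set.Ioi (0 : ℝ))
      (fun p : ℝ × ℝ => (yi - yj) ^ 2 / (2 * (σi ^ 2 / p.1 + σj ^ 2 / p.2))) := by
  refine ((concaveOn_inv_div_add_div (pow_pos hσi 2) (pow_pos hσj 2)).smul
    (by positivity : (0 : ℝ) ≤ (yi - yj) ^ 2 / 2)).congr fun p _ => ?_
  simp only [smul_eq_mul, ← div_eq_mul_inv, div_div]

/-- The pairwise large-deviations rate
`R(rᵢ, rⱼ) = (yᵢ − yⱼ)²/(2(σᵢ²/rᵢ + σⱼ²/rⱼ))` is jointly concave on `(0,∞)²`. -/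
theorem pairwise_rate_concave
    (yi yj σi σj : ℝ) (hy : yj < yi) (hσi : 0 < σi) (hσj : 0 < σj) :
    ConcaveOn ℝ (Set.Ioi (0 : ℝ) ×ˢ Set.Ioi (0 : ℝ))
      (fun p : ℝ × ℝ => (yi - yj) ^ 2 / (2 * (σi ^ 2 / p.1 + σj ^ 2 / p.2))) :=
  pairwise_rate_concave_general yi yj σi σj hσi hσj
end

section
/- Consider maximizing z subject to R^ℓ_{ij}(r) ≥ z for all i ∈ {1..m}, j ∈ {m+1..k}, ℓ ∈ {1..q}, Σ_{h,ℓ} r_{hℓ} = 1, r ≥ 0, where each R^ℓ_{ij}(r) = (y_{iℓ} − y_{jℓ})²/(2(σ_{iℓ}²/r_{iℓ} + σ_{jℓ}²/r_{jℓ})) with y_{iℓ} > y_{jℓ}. Then any optimal solution satisfies r*_{hℓ} > 0 for all h, ℓ. -/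
/-- Any optimal solution of the max-min rate allocation problem allocates a strictly
positive fraction to every design-context pair. -/
theorem optimal_allocation_positive
    (k q m : ℕ) (hm : 1 ≤ m) (hmk : m < k) (hq : 1 ≤ q)
    (y σ : Fin k → Fin q → ℝ)
    (hσ : ∀ h ℓ, 0 < σ h ℓ)
    (hy : ∀ ℓ, ∀ i j : Fin k, (i : ℕ) < m → m ≤ (j : ℕ) → y j ℓ < y i ℓ)
    (R : Fin k → Fin k → Fin q → (Fin k → Fin q → ℝ) → ℝ)
    (hR : ∀ i j ℓ r, R i j ℓ r =
      if r i ℓ = 0 ∨ r j ℓ = 0 then 0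
      else (y i ℓ - y j ℓ) ^ 2 / (2 * ((σ i ℓ) ^ 2 / r i ℓ + (σ j ℓ) ^ 2 / r j ℓ)))
    (triples : Finset (Fin k × Fin k × Fin q))
    (htriples : triples = Finset.univ.filter
      (fun p : Fin k × Fin k × Fin q => (p.1 : ℕ) < m ∧ m ≤ (p.2.1 : ℕ)))
    (hne : triples.Nonempty)
    (F : (Fin k → Fin q → ℝ) → ℝ)
    (hF : ∀ r, F r = triples.inf' hne (fun p => R p.1 p.2.1 p.2.2 r))
    (rstar : Fin k → Fin q → ℝ)
    (hnonneg : ∀ h ℓ, 0 ≤ rstar h ℓ)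
    (hsum : ∑ h : Fin k, ∑ ℓ : Fin q, rstar h ℓ = 1)
    (hopt : ∀ r : Fin k → Fin q → ℝ,
      (∀ h ℓ, 0 ≤ r h ℓ) → (∑ h : Fin k, ∑ ℓ : Fin q, r h ℓ = 1) → F r ≤ F rstar) :
    ∀ h ℓ, 0 < rstar h ℓ := by
  have hk : 0 < k := lt_of_le_of_lt (Nat.zero_le m) hmk
  have hNpos : (0:ℝ) < (k : ℝ) * (q : ℝ) := by
    have : 0 < k * q := Nat.mul_pos hk hq
    exact_mod_cast this
  set r0 : Fin k → Fin q → ℝ := fun _ _ => 1 / ((k : ℝ) * (q : ℝ)) with hr0def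
  have hr0 : ∀ (h : Fin k) (ℓ : Fin q), 0 < r0 h ℓ := fun _ _ => by
    simp only [hr0def]; positivity
  have hsum0 : ∑ h : Fin k, ∑ ℓ : Fin q, r0 h ℓ = 1 := by
    simp only [hr0def, Finset.sum_const, Finset.card_univ, Fintype.card_fin,
      nsmul_eq_mul]
    field_simp
  have hF0 : 0 < F r0 := by
    rw [hF, Finset.lt_inf'_iff]
    intro p hp
    rw [htriples, Finset.mem_filter] at hp
    obtain ⟨-, h1, h2⟩ := hp
    rw [hR, if_neg (by push_neg; exact ⟨(hr0 p.1 p.2.2).ne', (hr0 p.2.1 p.2.2).ne'⟩)]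
    have hy' := hy p.2.2 p.1 p.2.1 h1 h2
    apply div_pos (pow_pos (sub_pos.mpr hy') 2)
    have d1 : 0 < σ p.1 p.2.2 ^ 2 / r0 p.1 p.2.2 :=
      div_pos (pow_pos (hσ p.1 p.2.2) 2) (hr0 p.1 p.2.2)
    have d2 : 0 < σ p.2.1 p.2.2 ^ 2 / r0 p.2.1 p.2.2 :=
      div_pos (pow_pos (hσ p.2.1 p.2.2) 2) (hr0 p.2.1 p.2.2)
    linarith
  have hpos : 0 < F rstar :=
    lt_of_lt_of_le hF0 (hopt r0 (fun h ℓ => (hr0 h ℓ).le) hsum0)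
  intro h ℓ
  by_contra hc
  have h0 : rstar h ℓ = 0 := le_antisymm (not_lt.mp hc) (hnonneg h ℓ)
  rcases lt_or_ge (h : ℕ) m with hlt | hge
  · have hmem : (h, (⟨m, hmk⟩ : Fin k), ℓ) ∈ triples := by
      rw [htriples, Finset.mem_filter]
      exact ⟨Finset.mem_univ _, hlt, le_refl m⟩
    have hle : F rstar ≤ R h ⟨m, hmk⟩ ℓ rstar := by
      rw [hF]; exact Finset.inf'_le _ hmem
    rw [hR, if_pos (Or.inl h0)] at hle
    linarith
  · have hmem : ((⟨0, hk⟩ : Fin k), h, ℓ) ∈ triples := by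
      rw [htriples, Finset.mem_filter]
      exact ⟨Finset.mem_univ _, hm, hge⟩
    have hle : F rstar ≤ R ⟨0, hk⟩ h ℓ rstar := by
      rw [hF]; exact Finset.inf'_le _ hmem
    rw [hR, if_pos (Or.inr h0)] at hle
    linarith
end

section
/- At any optimal solution r* of the max-min rate allocation problem, for each context ℓ and each i ∈ {1,...,m}, min_{j = m+1,...,k} R^ℓ_{ij}(r*_{iℓ}, r*_{jℓ}) equals the optimal value z*, and for each j ∈ {m+1,...,k}, min_{i = 1,...,m} R^ℓ_{ij}(r*_{iℓ}, r*_{jℓ}) equals z*; in particular these quantities are equal across all contexts ℓ. -/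
open Filter Topology

lemma core_lemma {k q : ℕ} (y σ : Fin k → Fin q → ℝ) (hσ : ∀ h ℓ, 0 < σ h ℓ)
    (R : Fin k → Fin k → Fin q → (Fin k → Fin q → ℝ) → ℝ)
    (hR : ∀ i j ℓ r, R i j ℓ r =
      if r i ℓ = 0 ∨ r j ℓ = 0 then 0
      else (y i ℓ - y j ℓ) ^ 2 / (2 * ((σ i ℓ) ^ 2 / r i ℓ + (σ j ℓ) ^ 2 / r j ℓ)))
    (triples : Finset (Fin k × Fin k × Fin q)) (hne : triples.Nonempty)
    (hN : ∀ p ∈ triples, y p.1 p.2.2 ≠ y p.2.1 p.2.2)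
    (F : (Fin k → Fin q → ℝ) → ℝ)
    (hF : ∀ r, F r = triples.inf' hne (fun p => R p.1 p.2.1 p.2.2 r))
    (rstar : Fin k → Fin q → ℝ)
    (hpos : ∀ h ℓ, 0 < rstar h ℓ)
    (hsum : ∑ h : Fin k, ∑ ℓ : Fin q, rstar h ℓ = 1)
    (hopt : ∀ r : Fin k → Fin q → ℝ,
      (∀ h ℓ, 0 ≤ r h ℓ) → (∑ h : Fin k, ∑ ℓ : Fin q, r h ℓ = 1) → F r ≤ F rstar)
    (h0 : Fin k) (ℓ0 : Fin q)
    (hgap : ∀ p ∈ triples, p.2.2 = ℓ0 → (p.1 = h0 ∨ p.2.1 = h0) →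
      F rstar < R p.1 p.2.1 p.2.2 rstar) : False := by
  classical
  set z := F rstar with hz
  have hkq : (0:ℝ) < ((k * q : ℕ) : ℝ) := by
    obtain ⟨p, hp⟩ := hne
    have hk : 0 < k := p.1.pos
    have hq : 0 < q := p.2.2.pos
    exact_mod_cast Nat.mul_pos hk hq
  set n : ℝ := ((k * q : ℕ) : ℝ) with hn
  -- perturbation direction
  set d : Fin k → Fin q → ℝ := fun h ℓ => if h = h0 ∧ ℓ = ℓ0 then 1 - n else 1 with hd
  set rr : ℝ → Fin k → Fin q → ℝ := fun ε h ℓ => rstar h ℓ + ε * d h ℓ with hrr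
  -- sum is preserved
  have hsumd : ∑ h : Fin k, ∑ ℓ : Fin q, d h ℓ = 0 := by
    have : ∀ h : Fin k, ∀ ℓ : Fin q, d h ℓ = 1 - (if h = h0 then (if ℓ = ℓ0 then n else 0) else 0) := by
      intro h ℓ
      by_cases h1 : h = h0 <;> by_cases h2 : ℓ = ℓ0 <;> simp [hd, h1, h2]
    simp only [this, Finset.sum_sub_distrib, Finset.sum_const, Finset.card_univ,
      Fintype.card_fin, nsmul_eq_mul, mul_one]
    have h1 : (∑ x : Fin k, ∑ x1 : Fin q, if x = h0 then if x1 = ℓ0 then n else 0 else 0) = n := by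
      rw [Finset.sum_eq_single h0]
      · rw [Finset.sum_eq_single ℓ0]
        · simp
        · intro b _ hb; simp [hb]
        · simp
      · intro b _ hb; simp [hb]
      · simp
    rw [h1]
    push_cast [hn]
    ring
  have hsumrr : ∀ ε : ℝ, ∑ h : Fin k, ∑ ℓ : Fin q, rr ε h ℓ = 1 := by
    intro ε
    simp only [hrr]
    rw [show (∑ h : Fin k, ∑ ℓ : Fin q, (rstar h ℓ + ε * d h ℓ))
        = (∑ h : Fin k, ∑ ℓ : Fin q, rstar h ℓ) + ε * (∑ h : Fin k, ∑ ℓ : Fin q, d h ℓ) by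
      rw [Finset.mul_sum]
      rw [← Finset.sum_add_distrib]
      congr 1; ext h
      rw [Finset.mul_sum, ← Finset.sum_add_distrib]]
    rw [hsum, hsumd]; ring
  -- R formula at positive rates
  have hRval : ∀ (i j : Fin k) (ℓ : Fin q) (r : Fin k → Fin q → ℝ), 0 < r i ℓ → 0 < r j ℓ →
      R i j ℓ r = (y i ℓ - y j ℓ) ^ 2 / (2 * ((σ i ℓ) ^ 2 / r i ℓ + (σ j ℓ) ^ 2 / r j ℓ)) := by
    intro i j ℓ r hi hj
    rw [hR, if_neg]
    push_neg
    exact ⟨hi.ne', hj.ne'⟩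
  have hzle : ∀ p ∈ triples, z ≤ R p.1 p.2.1 p.2.2 rstar := by
    intro p hp
    rw [hz, hF]
    exact Finset.inf'_le _ hp
  set ε₁ : ℝ := rstar h0 ℓ0 / n with hε₁
  have hε₁pos : 0 < ε₁ := div_pos (hpos h0 ℓ0) hkq
  have hn1 : (1:ℝ) ≤ n := by
    have : 1 ≤ k * q := by
      obtain ⟨p, hp⟩ := hne
      exact Nat.one_le_iff_ne_zero.mpr (Nat.mul_ne_zero p.1.pos.ne' p.2.2.pos.ne')
    rw [hn]; exact_mod_cast this
  -- positivity of perturbed rates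
  have hrrpos : ∀ ε : ℝ, 0 ≤ ε → ε < ε₁ → ∀ h ℓ, 0 < rr ε h ℓ := by
    intro ε hε hεlt h ℓ
    have hεn : ε * n < rstar h0 ℓ0 := by
      rw [hε₁, lt_div_iff₀ hkq] at hεlt
      exact hεlt
    by_cases hcase : h = h0 ∧ ℓ = ℓ0
    · obtain ⟨h1, h2⟩ := hcase
      simp only [hrr, hd, h1, h2, and_self, if_true]
      nlinarith [hpos h0 ℓ0]
    · simp only [hrr, hd, if_neg hcase]
      have := hpos h ℓ
      nlinarith
  -- key eventual inequality for each triple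
  have key : ∀ p ∈ triples, ∀ᶠ ε in 𝓝[>] (0:ℝ), z < R p.1 p.2.1 p.2.2 (rr ε) := by
    intro p hp
    have hIoo : Set.Ioo (0:ℝ) ε₁ ∈ 𝓝[>] (0:ℝ) :=
      Ioo_mem_nhdsGT_of_mem ⟨le_refl 0, hε₁pos⟩
    set i := p.1 with hi
    set j := p.2.1 with hj
    set ℓ := p.2.2 with hℓ
    set a := rstar i ℓ with ha
    set b := rstar j ℓ with hb
    set s1 := (σ i ℓ) ^ 2 with hs1
    set s2 := (σ j ℓ) ^ 2 with hs2
    set N := (y i ℓ - y j ℓ) ^ 2 with hN2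
    have hapos : 0 < a := hpos i ℓ
    have hbpos : 0 < b := hpos j ℓ
    have hs1pos : 0 < s1 := pow_pos (hσ i ℓ) 2
    have hs2pos : 0 < s2 := pow_pos (hσ j ℓ) 2
    have hNpos : 0 < N := by
      have hne0 : y i ℓ - y j ℓ ≠ 0 := sub_ne_zero.mpr (hN p hp)
      rw [hN2]
      exact (sq_nonneg _).lt_of_ne' (pow_ne_zero 2 hne0)
    have hrrval : ∀ ε : ℝ, 0 ≤ ε → ε < ε₁ →
        R i j ℓ (rr ε) = N / (2 * (s1 / (a + ε * d i ℓ) + s2 / (b + ε * d j ℓ))) := by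
      intro ε hε hεlt
      exact hRval i j ℓ (rr ε) (hrrpos ε hε hεlt i ℓ) (hrrpos ε hε hεlt j ℓ)
    by_cases hc : ℓ = ℓ0 ∧ (i = h0 ∨ j = h0)
    · -- touching case: use continuity
      have hgt : z < R i j ℓ rstar := hgap p hp hc.1 hc.2
      have hRstar : R i j ℓ rstar = N / (2 * (s1 / a + s2 / b)) := hRval i j ℓ rstar hapos hbpos
      set g : ℝ → ℝ := fun ε => N / (2 * (s1 / (a + ε * d i ℓ) + s2 / (b + ε * d j ℓ))) with hg
      have hg0 : g 0 = R i j ℓ rstar := by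
        rw [hRstar, hg]
        norm_num
      have hcont : ContinuousAt g 0 := by
        apply ContinuousAt.div continuousAt_const
        · apply ContinuousAt.mul continuousAt_const
          apply ContinuousAt.add
          · exact ContinuousAt.div continuousAt_const (by fun_prop) (by simpa using hapos.ne')
          · exact ContinuousAt.div continuousAt_const (by fun_prop) (by simpa using hbpos.ne')
        · simp only [zero_mul, add_zero]
          positivity
      have hev : ∀ᶠ ε in 𝓝 (0:ℝ), z < g ε := by
        have : z < g 0 := by rw [hg0]; exact hgt
        exact hcont.eventually (eventually_gt_nhds this)
      have hev' : ∀ᶠ ε in 𝓝[>] (0:ℝ), z < g ε := nhdsWithin_le_nhds hev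
      filter_upwards [hev', hIoo] with ε hε1 hε2
      rw [hrrval ε hε2.1.le hε2.2]
      exact hε1
    · -- non-touching case: strict monotonicity
      have hd1 : d i ℓ = 1 := by
        rw [hd]
        simp only
        rw [if_neg]
        intro ⟨e1, e2⟩
        exact hc ⟨e2, Or.inl e1⟩
      have hd2 : d j ℓ = 1 := by
        rw [hd]
        simp only
        rw [if_neg]
        intro ⟨e1, e2⟩
        exact hc ⟨e2, Or.inr e1⟩
      have hRstar : R i j ℓ rstar = N / (2 * (s1 / a + s2 / b)) := hRval i j ℓ rstar hapos hbpos
      filter_upwards [hIoo] with ε hε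
      obtain ⟨hε0, hεlt⟩ := hε
      rw [hrrval ε hε0.le hεlt, hd1, hd2, mul_one]
      have hale : 0 < a + ε := by linarith
      have hble : 0 < b + ε := by linarith
      have hmono : s1 / (a + ε) + s2 / (b + ε) < s1 / a + s2 / b := by
        have h1 : s1 / (a + ε) < s1 / a :=
          div_lt_div_of_pos_left hs1pos hapos (by linarith)
        have h2 : s2 / (b + ε) < s2 / b :=
          div_lt_div_of_pos_left hs2pos hbpos (by linarith)
        linarith
      have hDpos : 0 < 2 * (s1 / (a + ε) + s2 / (b + ε)) := by positivity
      have hlt : N / (2 * (s1 / a + s2 / b)) < N / (2 * (s1 / (a + ε) + s2 / (b + ε))) :=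
        div_lt_div_of_pos_left hNpos hDpos (by linarith)
      calc z ≤ R i j ℓ rstar := hzle p hp
        _ = N / (2 * (s1 / a + s2 / b)) := hRstar
        _ < _ := hlt
  -- combine
  have hall : ∀ᶠ ε in 𝓝[>] (0:ℝ), ∀ p ∈ triples, z < R p.1 p.2.1 p.2.2 (rr ε) :=
    (Filter.eventually_all_finset triples).2 key
  have hIoo : Set.Ioo (0:ℝ) ε₁ ∈ 𝓝[>] (0:ℝ) :=
    Ioo_mem_nhdsGT_of_mem ⟨le_refl 0, hε₁pos⟩
  obtain ⟨ε, hε1, hε2⟩ := (hall.and (Filter.eventually_of_mem hIoo (fun x hx => hx))).exists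
  have hfeas := hopt (rr ε) (fun h ℓ => (hrrpos ε hε2.1.le hε2.2 h ℓ).le) (hsumrr ε)
  have hlt : z < F (rr ε) := by
    rw [hF]
    exact (Finset.lt_inf'_iff hne).mpr (fun p hp => hε1 p hp)
  linarith


/-- At any optimal solution `r*` of the max-min rate allocation problem, for every
context `ℓ` and every `i ≤ m` the minimum over `j > m` of `R^ℓ_{ij}(r*)` equals the
optimal value `z* = F r*`, and symmetrically for every `j > m` the minimum over
`i ≤ m` equals `z*`; in particular these quantities agree across all contexts. -/
theorem optimal_allocation_balance
    (k q m : ℕ) (hm : 1 ≤ m) (hmk : m < k) (hq : 1 ≤ q)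
    (y σ : Fin k → Fin q → ℝ)
    (hσ : ∀ h ℓ, 0 < σ h ℓ)
    (hy : ∀ ℓ, ∀ i j : Fin k, (i : ℕ) < m → m ≤ (j : ℕ) → y j ℓ < y i ℓ)
    (R : Fin k → Fin k → Fin q → (Fin k → Fin q → ℝ) → ℝ)
    (hR : ∀ i j ℓ r, R i j ℓ r =
      if r i ℓ = 0 ∨ r j ℓ = 0 then 0
      else (y i ℓ - y j ℓ) ^ 2 / (2 * ((σ i ℓ) ^ 2 / r i ℓ + (σ j ℓ) ^ 2 / r j ℓ)))
    (triples : Finset (Fin k × Fin k × Fin q))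
    (htriples : triples = Finset.univ.filter
      (fun p : Fin k × Fin k × Fin q => (p.1 : ℕ) < m ∧ m ≤ (p.2.1 : ℕ)))
    (hne : triples.Nonempty)
    (F : (Fin k → Fin q → ℝ) → ℝ)
    (hF : ∀ r, F r = triples.inf' hne (fun p => R p.1 p.2.1 p.2.2 r))
    (rstar : Fin k → Fin q → ℝ)
    (hnonneg : ∀ h ℓ, 0 ≤ rstar h ℓ)
    (hsum : ∑ h : Fin k, ∑ ℓ : Fin q, rstar h ℓ = 1)
    (hopt : ∀ r : Fin k → Fin q → ℝ,
      (∀ h ℓ, 0 ≤ r h ℓ) → (∑ h : Fin k, ∑ ℓ : Fin q, r h ℓ = 1) → F r ≤ F rstar)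
    (hneJ : (Finset.univ.filter (fun j : Fin k => m ≤ (j : ℕ))).Nonempty)
    (hneI : (Finset.univ.filter (fun i : Fin k => (i : ℕ) < m)).Nonempty) :
    (∀ ℓ : Fin q, ∀ i : Fin k, (i : ℕ) < m →
      (Finset.univ.filter (fun j : Fin k => m ≤ (j : ℕ))).inf' hneJ
        (fun j => R i j ℓ rstar) = F rstar) ∧
    (∀ ℓ : Fin q, ∀ j : Fin k, m ≤ (j : ℕ) →
      (Finset.univ.filter (fun i : Fin k => (i : ℕ) < m)).inf' hneI
        (fun i => R i j ℓ rstar) = F rstar) := by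
  classical
  have hmem : ∀ (i j : Fin k) (ℓ : Fin q), (i : ℕ) < m → m ≤ (j : ℕ) →
      (i, j, ℓ) ∈ triples := by
    intro i j ℓ hi hj
    rw [htriples, Finset.mem_filter]
    exact ⟨Finset.mem_univ _, hi, hj⟩
  have hN : ∀ p ∈ triples, y p.1 p.2.2 ≠ y p.2.1 p.2.2 := by
    intro p hp
    rw [htriples, Finset.mem_filter] at hp
    exact (hy p.2.2 p.1 p.2.1 hp.2.1 hp.2.2).ne'
  -- the uniform allocation has positive value
  have hkq : (0:ℝ) < ((k * q : ℕ) : ℝ) := by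
    have : 0 < k * q := Nat.mul_pos (by omega) (by omega)
    exact_mod_cast this
  set r0 : Fin k → Fin q → ℝ := fun _ _ => ((k * q : ℕ) : ℝ)⁻¹ with hr0
  have hr0pos : ∀ h ℓ, 0 < r0 h ℓ := fun _ _ => inv_pos.mpr hkq
  have hsum0 : ∑ h : Fin k, ∑ ℓ : Fin q, r0 h ℓ = 1 := by
    simp only [hr0, Finset.sum_const, Finset.card_univ, Fintype.card_fin, nsmul_eq_mul]
    rw [← mul_assoc]
    push_cast
    rw [mul_inv_cancel₀]
    push_cast at hkq
    positivity
  have hF0pos : 0 < F r0 := by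
    rw [hF]
    apply (Finset.lt_inf'_iff hne).mpr
    intro p hp
    rw [hR, if_neg (by push_neg; exact ⟨(hr0pos p.1 p.2.2).ne', (hr0pos p.2.1 p.2.2).ne'⟩)]
    have hy0 : y p.1 p.2.2 - y p.2.1 p.2.2 ≠ 0 := sub_ne_zero.mpr (hN p hp)
    have h1 : 0 < (y p.1 p.2.2 - y p.2.1 p.2.2) ^ 2 :=
      (sq_nonneg _).lt_of_ne' (pow_ne_zero 2 hy0)
    have h2 := hr0pos p.1 p.2.2
    have h3 := hr0pos p.2.1 p.2.2
    have h4 := hσ p.1 p.2.2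
    have h5 := hσ p.2.1 p.2.2
    positivity
  have hzpos : 0 < F rstar := lt_of_lt_of_le hF0pos (hopt r0 (fun h ℓ => (hr0pos h ℓ).le) hsum0)
  -- all rstar entries are positive
  have hRz : ∀ p ∈ triples, 0 < R p.1 p.2.1 p.2.2 rstar := by
    intro p hp
    have : F rstar ≤ R p.1 p.2.1 p.2.2 rstar := by
      rw [hF]; exact Finset.inf'_le _ hp
    linarith
  have hentry : ∀ p ∈ triples, rstar p.1 p.2.2 ≠ 0 ∧ rstar p.2.1 p.2.2 ≠ 0 := by
    intro p hp
    have h := hRz p hp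
    rw [hR] at h
    by_contra hc
    rw [if_pos (by tauto)] at h
    exact lt_irrefl 0 h
  have hpos : ∀ h ℓ, 0 < rstar h ℓ := by
    intro h ℓ
    rcases lt_or_ge (h : ℕ) m with hh | hh
    · have := (hentry (h, ⟨m, hmk⟩, ℓ) (hmem h ⟨m, hmk⟩ ℓ hh (le_refl m))).1
      exact (hnonneg h ℓ).lt_of_ne' this
    · have h0m : (0 : ℕ) < m := hm
      have hk0 : 0 < k := lt_of_le_of_lt (Nat.zero_le m) hmk
      have := (hentry (⟨0, hk0⟩, h, ℓ) (hmem ⟨0, hk0⟩ h ℓ h0m hh)).2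
      exact (hnonneg h ℓ).lt_of_ne' this
  constructor
  · intro ℓ i hi
    have hle : F rstar ≤ (Finset.univ.filter (fun j : Fin k => m ≤ (j : ℕ))).inf' hneJ
        (fun j => R i j ℓ rstar) := by
      apply Finset.le_inf'
      intro j hj
      rw [Finset.mem_filter] at hj
      rw [hF]
      exact Finset.inf'_le _ (hmem i j ℓ hi hj.2)
    rcases eq_or_lt_of_le hle with heq | hlt
    · exact heq.symm
    · exfalso
      apply core_lemma y σ hσ R hR triples hne hN F hF rstar hpos hsum hopt i ℓ
      intro p hp hpl hporv
      have hpt := hp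
      rw [htriples, Finset.mem_filter] at hpt
      have hp1 : p.1 = i := by
        rcases hporv with h | h
        · exact h
        · exfalso; rw [h] at hpt; omega
      have hjmem : p.2.1 ∈ Finset.univ.filter (fun j : Fin k => m ≤ (j : ℕ)) := by
        rw [Finset.mem_filter]; exact ⟨Finset.mem_univ _, hpt.2.2⟩
      calc F rstar < _ := hlt
        _ ≤ R i p.2.1 ℓ rstar := Finset.inf'_le _ hjmem
        _ = R p.1 p.2.1 p.2.2 rstar := by rw [hp1, hpl]
  · intro ℓ j hj
    have hle : F rstar ≤ (Finset.univ.filter (fun i : Fin k => (i : ℕ) < m)).inf' hneI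
        (fun i => R i j ℓ rstar) := by
      apply Finset.le_inf'
      intro i hi
      rw [Finset.mem_filter] at hi
      rw [hF]
      exact Finset.inf'_le _ (hmem i j ℓ hi.2 hj)
    rcases eq_or_lt_of_le hle with heq | hlt
    · exact heq.symm
    · exfalso
      apply core_lemma y σ hσ R hR triples hne hN F hF rstar hpos hsum hopt j ℓ
      intro p hp hpl hporv
      have hpt := hp
      rw [htriples, Finset.mem_filter] at hpt
      have hp1 : p.2.1 = j := by
        rcases hporv with h | h
        · exfalso; rw [h] at hpt; omega
        · exact h
      have himem : p.1 ∈ Finset.univ.filter (fun i : Fin k => (i : ℕ) < m) := by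
        rw [Finset.mem_filter]; exact ⟨Finset.mem_univ _, hpt.2.1⟩
      calc F rstar < _ := hlt
        _ ≤ R p.1 j ℓ rstar := Finset.inf'_le _ himem
        _ = R p.1 p.2.1 p.2.2 rstar := by rw [hp1, hpl]
end

section
/- Suppose for each ℓ ∈ {1,...,q}, α*_ℓ ∈ ℝ^k_{>0} with Σ_h α*_{hℓ} = 1 achieves per-context rate z_ℓ > 0 in the context-free problem (i.e., min_{i ≤ m < j} R^ℓ_{ij}(α*_{iℓ}, α*_{jℓ}) = z_ℓ). Define r_ℓ = (1/z_ℓ)/Σ_{ℓ'} (1/z_{ℓ'}) and r*_{hℓ} = r_ℓ · α*_{hℓ}. Then Σ_{h,ℓ} r*_{hℓ} = 1 and min over all (i,j,ℓ) of R^ℓ_{ij}(r*_{iℓ}, r*_{jℓ}) equals z* = 1/Σ_{ℓ'} (1/z_{ℓ'}), and this common value is attained in every context. -/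
/-!
Each rate `R^ℓ_{ij}` is homogeneous of degree one in the allocation, so scaling the
context-optimal allocation `α*_ℓ` by `r_ℓ` scales the minimal rate of context `ℓ` from `z_ℓ`
to `r_ℓ z_ℓ = 1 / Σ_{ℓ'} 1/z_{ℓ'}`, the same value in every context; the overall minimum is
then that common value, and the weights `r_ℓ` sum to one.
-/

/-- No side conditions are needed: `x / 0 = 0` makes both sides vanish in the degenerate cases. -/
theorem div_two_mul_div_add_div_mul_mul {K : Type*} [Field K] (d s t c a b : K) :
    d / (2 * (s / (c * a) + t / (c * b))) = c * (d / (2 * (s / a + t / b))) := by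
  rw [div_mul_eq_div_div_swap s, div_mul_eq_div_div_swap t, ← add_div, ← mul_div_assoc,
    div_div_eq_mul_div]
  ring

theorem Finset.mul_inf'_of_nonneg {ι R : Type*} [Semiring R] [LinearOrder R] [PosMulMono R]
    {s : Finset ι} (H : s.Nonempty) (f : ι → R) {c : R} (hc : 0 ≤ c) :
    c * s.inf' H f = s.inf' H fun i => c * f i :=
  apply_inf'_eq_inf'_comp H (c * ·) fun x y => mul_min_of_nonneg x y hc

theorem context_rate_decomposition_general
    (k q : ℕ)
    (y σ : Fin k → Fin q → ℝ)
    (R : Fin k → Fin k → Fin q → ℝ → ℝ → ℝ)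
    (hR : ∀ i j ℓ a b, R i j ℓ a b =
      (y i ℓ - y j ℓ) ^ 2 / (2 * ((σ i ℓ) ^ 2 / a + (σ j ℓ) ^ 2 / b)))
    (pairs : Finset (Fin k × Fin k))
    (hpne : pairs.Nonempty)
    (α : Fin k → Fin q → ℝ) (z : Fin q → ℝ)
    (hαsum : ∀ ℓ, ∑ h : Fin k, α h ℓ = 1)
    (hz : ∀ ℓ, 0 < z ℓ)
    (hach : ∀ ℓ, pairs.inf' hpne (fun p => R p.1 p.2 ℓ (α p.1 ℓ) (α p.2 ℓ)) = z ℓ)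
    (r : Fin q → ℝ)
    (hr : ∀ ℓ, r ℓ = (1 / z ℓ) / ∑ ℓ' : Fin q, 1 / z ℓ')
    (rstar : Fin k → Fin q → ℝ)
    (hrs : ∀ h ℓ, rstar h ℓ = r ℓ * α h ℓ)
    (hqne : (Finset.univ : Finset (Fin q)).Nonempty) :
    (∑ h : Fin k, ∑ ℓ : Fin q, rstar h ℓ = 1) ∧
    ((pairs ×ˢ (Finset.univ : Finset (Fin q))).inf'
      (hpne.product hqne)
      (fun p => R p.1.1 p.1.2 p.2 (rstar p.1.1 p.2) (rstar p.1.2 p.2))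
      = 1 / ∑ ℓ' : Fin q, 1 / z ℓ') ∧
    (∀ ℓ : Fin q, pairs.inf' hpne
      (fun p => R p.1 p.2 ℓ (rstar p.1 ℓ) (rstar p.2 ℓ))
      = 1 / ∑ ℓ' : Fin q, 1 / z ℓ') := by
  have hS : 0 < ∑ ℓ' : Fin q, 1 / z ℓ' :=
    Finset.sum_pos (fun ℓ _ => one_div_pos.mpr (hz ℓ)) hqne
  have hslice : ∀ ℓ, pairs.inf' hpne (fun p => R p.1 p.2 ℓ (rstar p.1 ℓ) (rstar p.2 ℓ))
      = 1 / ∑ ℓ' : Fin q, 1 / z ℓ' := by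
    intro ℓ
    have hrℓ : 0 ≤ r ℓ := by rw [hr]; exact div_nonneg (one_div_pos.mpr (hz ℓ)).le hS.le
    simp_rw [hrs, hR, div_two_mul_div_add_div_mul_mul, ← hR]
    rw [← Finset.mul_inf'_of_nonneg hpne _ hrℓ, hach, hr]
    field_simp [(hz ℓ).ne']
  refine ⟨?_, ?_, hslice⟩
  · rw [Finset.sum_comm]
    simp_rw [hrs, ← Finset.mul_sum, hαsum, mul_one, hr, ← Finset.sum_div]
    exact div_self hS.ne'
  · rw [Finset.inf'_product_right]
    simp_rw [hslice]
    exact Finset.inf'_const _ _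

/-- Decomposition of the context-dependent asymptotically optimal sampling ratios:
scaling per-context optimal allocations `α*_ℓ` by `r_ℓ = (1/z_ℓ)/Σ_{ℓ'}(1/z_{ℓ'})`
yields a feasible allocation whose overall min rate equals `z* = 1/Σ_{ℓ'}(1/z_{ℓ'})`,
and this common value is attained within every context. -/
theorem context_rate_decomposition
    (k q m : ℕ) (hm : 1 ≤ m) (hmk : m < k) (hq : 1 ≤ q)
    (y σ : Fin k → Fin q → ℝ)
    (hσ : ∀ h ℓ, 0 < σ h ℓ)
    (hy : ∀ ℓ, ∀ i j : Fin k, (i : ℕ) < m → m ≤ (j : ℕ) → y j ℓ < y i ℓ)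
    (R : Fin k → Fin k → Fin q → ℝ → ℝ → ℝ)
    (hR : ∀ i j ℓ a b, R i j ℓ a b =
      (y i ℓ - y j ℓ) ^ 2 / (2 * ((σ i ℓ) ^ 2 / a + (σ j ℓ) ^ 2 / b)))
    (pairs : Finset (Fin k × Fin k))
    (hpairs : pairs = Finset.univ.filter
      (fun p : Fin k × Fin k => (p.1 : ℕ) < m ∧ m ≤ (p.2 : ℕ)))
    (hpne : pairs.Nonempty)
    (α : Fin k → Fin q → ℝ) (z : Fin q → ℝ)
    (hα : ∀ h ℓ, 0 < α h ℓ) (hαsum : ∀ ℓ, ∑ h : Fin k, α h ℓ = 1)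
    (hz : ∀ ℓ, 0 < z ℓ)
    (hach : ∀ ℓ, pairs.inf' hpne (fun p => R p.1 p.2 ℓ (α p.1 ℓ) (α p.2 ℓ)) = z ℓ)
    (r : Fin q → ℝ)
    (hr : ∀ ℓ, r ℓ = (1 / z ℓ) / ∑ ℓ' : Fin q, 1 / z ℓ')
    (rstar : Fin k → Fin q → ℝ)
    (hrs : ∀ h ℓ, rstar h ℓ = r ℓ * α h ℓ)
    (hqne : (Finset.univ : Finset (Fin q)).Nonempty)
    (htne : (Finset.univ : Finset (Fin q × Fin k × Fin k)).Nonempty) :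
    (∑ h : Fin k, ∑ ℓ : Fin q, rstar h ℓ = 1) ∧
    ((pairs ×ˢ (Finset.univ : Finset (Fin q))).inf'
      (hpne.product hqne)
      (fun p => R p.1.1 p.1.2 p.2 (rstar p.1.1 p.2) (rstar p.1.2 p.2))
      = 1 / ∑ ℓ' : Fin q, 1 / z ℓ') ∧
    (∀ ℓ : Fin q, pairs.inf' hpne
      (fun p => R p.1 p.2 ℓ (rstar p.1 ℓ) (rstar p.2 ℓ))
      = 1 / ∑ ℓ' : Fin q, 1 / z ℓ') :=
  context_rate_decomposition_general k q y σ R hR pairs hpne α z hαsum hz hach r hr rstar hrs hqne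
end
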